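/- For every n ≥ 1, the sum over all 2-colored partitions of K_3 × P_n of the size of the partition equals 2^(3n-5)·(37 + 19n); that is, Σ_{i≥1} i·c(n,i) = 2^(3n-5)·(37 + 19n). Equivalently, the expected size of the partition induced by assigning one of two colors uniformly and independently to each of the 3n vertices of K_3 × P_n equals 2^(3n-5)·(37 + 19n)/2^(3n). -/

import Mathlib

open SimpleGraph Polynomial

/-- A 2-colored partition of a simple graph `G`: a partition of the vertex set into
nonempty parts, each inducing a connected subgraph, together with an assignment of one
of two colors to each part such that distinct parts joined by an edge get different colors. -/
structure TwoColoredPartition {V : Type*} (G : SimpleGraph V) where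
  parts : Set (Set V)
  nonempty : ∀ p ∈ parts, p.Nonempty
  covers : ∀ v : V, ∃ p, p ∈ parts ∧ v ∈ p
  disj : ∀ p ∈ parts, ∀ q ∈ parts, p ≠ q → Disjoint p q
  conn : ∀ p ∈ parts, (G.induce p).Connected
  color : parts → Fin 2
  proper : ∀ p q : parts, p ≠ q →
    (∃ v ∈ (p : Set V), ∃ w ∈ (q : Set V), G.Adj v w) → color p ≠ color q

/-- The size of a 2-colored partition: its number of parts. -/
noncomputable def TwoColoredPartition.size {V : Type*} {G : SimpleGraph V}
    (T : TwoColoredPartition G) : ℕ :=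
  T.parts.ncard

/-- `c n i` is the number of 2-colored partitions of `K₃ × Pₙ` of size `i`. -/
noncomputable def c (n i : ℕ) : ℕ :=
  Nat.card {T : TwoColoredPartition ((⊤ : SimpleGraph (Fin 3)) □ pathGraph n) // T.size = i}

/-- `tpoly n = ∑_{i ≥ 1} c(n,i) yⁱ ∈ ℤ[y]`. -/
noncomputable def tpoly (n : ℕ) : Polynomial ℤ :=
  ∑ᶠ (i : ℕ) (_ : 1 ≤ i), Polynomial.monomial i (c n i : ℤ)

/-!
A 2-colored partition is the same thing as a vertex 2-coloring, its parts being the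
monochromatic components, so `∑ i * c n i` is the total number of monochromatic components over
all `2^(3n)` colorings of `K₃ □ Pₙ`. Each layer is a triangle, so a monochromatic component is
determined by its lowest layer `j` and its color `c`, and a pair `(j, c)` arises in this way iff
`c` occurs in layer `j` and no column carries `c` in both layers `j - 1` and `j`. A given pair
with `j = 0` arises for `8 - 1 = 7` of the `8` colorings of layer `0`, and one with `j > 0` for
`3³ - 8 = 19` of the `64` colorings of layers `j - 1, j` (no column is `(c, c)`, minus those
where `c` is missing from layer `j`). Summing over the `2n` pairs gives
`2 (7 · 8^(n-1) + 19 (n - 1) 8^(n-2)) = 2^(3n-5) (37 + 19n)`.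
-/

namespace SimpleGraph

variable {V κ : Type*}

def monoGraph (G : SimpleGraph V) (f : V → κ) : SimpleGraph V where
  Adj u v := G.Adj u v ∧ f u = f v
  symm := ⟨fun _ _ h => ⟨h.1.symm, h.2.symm⟩⟩
  loopless := ⟨fun v h => G.loopless.irrefl v h.1⟩

variable {G : SimpleGraph V} {f : V → κ}

theorem monoGraph_adj {u v : V} : (G.monoGraph f).Adj u v ↔ G.Adj u v ∧ f u = f v := Iff.rfl

theorem Reachable.apply_eq_of_monoGraph {u v : V} (h : (G.monoGraph f).Reachable u v) :
    f u = f v := by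
  obtain ⟨p⟩ := h
  induction p with
  | nil => rfl
  | cons h _ ih => exact h.2.trans ih

theorem ConnectedComponent.apply_eq_of_mem_monoGraph {C : (G.monoGraph f).ConnectedComponent}
    {u v : V} (hu : u ∈ C) (hv : v ∈ C) : f u = f v :=
  (C.reachable_of_mem_supp hu hv).apply_eq_of_monoGraph

theorem ConnectedComponent.connected_induce_supp_monoGraph
    (C : (G.monoGraph f).ConnectedComponent) : (G.induce C.supp).Connected :=
  C.connected_toSimpleGraph.mono fun _ _ h => (monoGraph_adj.mp h).1

end SimpleGraph

namespace TwoColoredPartition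

variable {V : Type*} {G : SimpleGraph V}

theorem ext {T₁ T₂ : TwoColoredPartition G} (h : T₁.parts = T₂.parts)
    (hc : ∀ p (h₁ : p ∈ T₁.parts) (h₂ : p ∈ T₂.parts), T₁.color ⟨p, h₁⟩ = T₂.color ⟨p, h₂⟩) :
    T₁ = T₂ := by
  cases T₁; cases T₂
  dsimp only at h hc
  subst h
  congr
  exact funext fun q => hc q.1 q.2 q.2

noncomputable def partOf (T : TwoColoredPartition G) (v : V) : T.parts :=
  ⟨(T.covers v).choose, (T.covers v).choose_spec.1⟩

variable {T : TwoColoredPartition G}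

theorem mem_partOf (v : V) : v ∈ (T.partOf v : Set V) := (T.covers v).choose_spec.2

theorem partOf_eq {p : T.parts} {v : V} (hv : v ∈ (p : Set V)) : T.partOf v = p := by
  by_contra hne
  exact Set.disjoint_left.mp (T.disj _ (T.partOf v).2 _ p.2 (Subtype.coe_ne_coe.mpr hne))
    (mem_partOf v) hv

noncomputable def coloring (T : TwoColoredPartition G) (v : V) : Fin 2 := T.color (T.partOf v)

theorem coloring_eq {p : T.parts} {v : V} (hv : v ∈ (p : Set V)) : T.coloring v = T.color p := by
  rw [coloring, partOf_eq hv]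

theorem partOf_eq_of_adj {v w : V} (h : (G.monoGraph T.coloring).Adj v w) :
    T.partOf v = T.partOf w := by
  by_contra hne
  exact T.proper _ _ hne ⟨v, mem_partOf v, w, mem_partOf w, h.1⟩ h.2

theorem partOf_eq_partOf_iff {v w : V} :
    T.partOf v = T.partOf w ↔ (G.monoGraph T.coloring).Reachable v w := by
  constructor
  · intro h
    have hw : w ∈ (T.partOf v : Set V) := h ▸ mem_partOf w
    let toMono : G.induce (T.partOf v : Set V) →g G.monoGraph T.coloring :=
      { toFun := Subtype.val
        map_rel' := fun {a b} hab => ⟨hab, by rw [coloring_eq a.2, coloring_eq b.2]⟩ }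
    exact ((T.conn _ (T.partOf v).2).preconnected ⟨v, mem_partOf v⟩ ⟨w, hw⟩).map toMono
  · rintro ⟨p⟩
    induction p with
    | nil => rfl
    | cons h _ ih => exact (partOf_eq_of_adj h).trans ih

end TwoColoredPartition

namespace SimpleGraph

variable {V : Type*} (G : SimpleGraph V)

theorem apply_choose_out_eq_of_mem {f : V → Fin 2} {s : Set V}
    (h : ∃ C : (G.monoGraph f).ConnectedComponent, C.supp = s) {v : V} (hv : v ∈ s) :
    f h.choose.out = f v :=
  ConnectedComponent.apply_eq_of_mem_monoGraph h.choose.out_eq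
    (show v ∈ h.choose.supp from h.choose_spec.symm ▸ hv)

noncomputable def toTwoColoredPartition (f : V → Fin 2) : TwoColoredPartition G where
  parts := Set.range (ConnectedComponent.supp (G := G.monoGraph f))
  nonempty := by
    rintro _ ⟨C, rfl⟩
    exact C.nonempty_supp
  covers v := ⟨_, ⟨(G.monoGraph f).connectedComponentMk v, rfl⟩, rfl⟩
  disj := by
    rintro _ ⟨C, rfl⟩ _ ⟨D, rfl⟩ hne
    exact (G.monoGraph f).pairwise_disjoint_supp_connectedComponent (ne_of_apply_ne _ hne)
  conn := by
    rintro _ ⟨C, rfl⟩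
    exact C.connected_induce_supp_monoGraph
  color q := f q.2.choose.out
  proper := by
    rintro ⟨_, hC⟩ ⟨_, hD⟩ hne ⟨v, hv, w, hw, hadj⟩ hcol
    obtain ⟨C, rfl⟩ := id hC
    obtain ⟨D, rfl⟩ := id hD
    have hvw : (G.monoGraph f).Adj v w :=
      ⟨hadj, (G.apply_choose_out_eq_of_mem hC hv).symm.trans
        (hcol.trans (G.apply_choose_out_eq_of_mem hD hw))⟩
    have hCD : C = D := by
      rw [← (C.mem_supp_iff v).mp hv, ← (D.mem_supp_iff w).mp hw]
      exact ConnectedComponent.sound hvw.reachable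
    exact hne (by subst hCD; rfl)

variable {G}

theorem toTwoColoredPartition_color {f : V → Fin 2} {q : (G.toTwoColoredPartition f).parts}
    {v : V} (hv : v ∈ (q : Set V)) : (G.toTwoColoredPartition f).color q = f v :=
  G.apply_choose_out_eq_of_mem q.2 hv

theorem coloring_toTwoColoredPartition (f : V → Fin 2) :
    (G.toTwoColoredPartition f).coloring = f :=
  funext fun v => toTwoColoredPartition_color (TwoColoredPartition.mem_partOf v)

theorem toTwoColoredPartition_coloring (T : TwoColoredPartition G) :
    G.toTwoColoredPartition T.coloring = T := by
  have supp_eq (v : V) : ((G.monoGraph T.coloring).connectedComponentMk v).supp = T.partOf v := by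
    ext w
    rw [ConnectedComponent.mem_supp_iff, ConnectedComponent.eq,
      ← TwoColoredPartition.partOf_eq_partOf_iff]
    exact ⟨fun h => h ▸ T.mem_partOf w, fun h => T.partOf_eq h⟩
  have parts_eq : (G.toTwoColoredPartition T.coloring).parts = T.parts := by
    ext p
    constructor
    · rintro ⟨C, rfl⟩
      obtain ⟨v, rfl⟩ := C.exists_rep
      exact supp_eq v ▸ (T.partOf v).2
    · intro hp
      obtain ⟨v, hv⟩ := T.nonempty p hp
      exact ⟨_, (supp_eq v).trans (congrArg Subtype.val (T.partOf_eq (p := ⟨p, hp⟩) hv))⟩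
  refine TwoColoredPartition.ext parts_eq fun p h₁ h₂ => ?_
  obtain ⟨v, hv⟩ := T.nonempty p h₂
  rw [toTwoColoredPartition_color (q := ⟨p, h₁⟩) hv, T.coloring_eq (p := ⟨p, h₂⟩) hv]

noncomputable def twoColoredPartitionEquiv : TwoColoredPartition G ≃ (V → Fin 2) where
  toFun := TwoColoredPartition.coloring
  invFun := G.toTwoColoredPartition
  left_inv := toTwoColoredPartition_coloring
  right_inv := coloring_toTwoColoredPartition

theorem size_toTwoColoredPartition (f : V → Fin 2) :
    (G.toTwoColoredPartition f).size = Nat.card (G.monoGraph f).ConnectedComponent := by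
  rw [TwoColoredPartition.size, toTwoColoredPartition, ← Nat.card_coe_set_eq,
    Nat.card_range_of_injective ConnectedComponent.supp_injective]

theorem _root_.TwoColoredPartition.size_eq_card_connectedComponent (T : TwoColoredPartition G) :
    T.size = Nat.card (G.monoGraph T.coloring).ConnectedComponent := by
  conv_lhs => rw [← toTwoColoredPartition_coloring T]
  exact size_toTwoColoredPartition _

theorem card_twoColoredPartition_size_eq (G : SimpleGraph V) (i : ℕ) :
    Nat.card {T : TwoColoredPartition G // T.size = i} =
      Nat.card {f : V → Fin 2 // Nat.card (G.monoGraph f).ConnectedComponent = i} :=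
  Nat.card_congr <| G.twoColoredPartitionEquiv.subtypeEquiv fun T => by
    rw [T.size_eq_card_connectedComponent]; rfl

end SimpleGraph

open Finset in
theorem finsum_mul_card_fiber {X R : Type*} [Fintype X] [Semiring R] (g : X → ℕ) :
    ∑ᶠ (i : ℕ) (_ : 1 ≤ i), ((i : R) * Nat.card {x // g x = i}) = ∑ x, (g x : R) := by
  classical
  have hsupp {i : ℕ} (hi : (i : R) * Nat.card {x // g x = i} ≠ 0) : 1 ≤ i ↔ i ∈ univ.image g := by
    have hi0 : i ≠ 0 := fun h => hi (by simp [h])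
    have hcard : Nat.card {x // g x = i} ≠ 0 := fun h => hi (by rw [h]; simp)
    obtain ⟨⟨x, rfl⟩⟩ := (Nat.card_ne_zero.mp hcard).1
    exact iff_of_true (Nat.one_le_iff_ne_zero.mpr hi0) (mem_image_of_mem g (mem_univ x))
  rw [finsum_cond_eq_sum_of_cond_iff _ hsupp, sum_comp (fun i : ℕ => (i : R)) g]
  refine sum_congr rfl fun i _ => ?_
  rw [nsmul_eq_mul, Nat.cast_comm, Nat.card_eq_fintype_card, Fintype.card_subtype]

section Layers

open SimpleGraph

variable {α κ : Type*} {n m : ℕ} {H : SimpleGraph α} {f : α × Fin n → κ}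

theorem exists_vertical_monochromatic_of_walk {u v : α × Fin n}
    (w : ((H □ pathGraph n).monoGraph f).Walk u v) {j : Fin n} (hu : u.2 < j) (hv : j ≤ v.2) :
    ∃ p, ∃ i : Fin n, i.val + 1 = j.val ∧ f (p, i) = f u ∧ f (p, j) = f u := by
  induction w with
  | nil => exact absurd (hu.trans_le hv) (lt_irrefl _)
  | @cons u x v hux _ ih =>
    by_cases hx : x.2 < j
    · obtain ⟨p, i, hij, hpi, hpj⟩ := ih hx hv
      exact ⟨p, i, hij, hpi.trans hux.2.symm, hpj.trans hux.2.symm⟩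
    · rcases boxProd_adj.mp hux.1 with ⟨-, hux₂⟩ | ⟨hpath, hux₁⟩
      · exact absurd (hux₂ ▸ hu) hx
      · rw [pathGraph_adj] at hpath
        rw [not_lt, Fin.le_def] at hx
        rw [Fin.lt_def] at hu
        have hxj : x.2 = j := Fin.ext (by omega)
        refine ⟨u.1, u.2, by omega, rfl, ?_⟩
        rw [hux₁, ← hxj]
        exact hux.2.symm

def IsLayerStart (f : α × Fin n → κ) (j : Fin n) (c : κ) : Prop :=
  (∃ p, f (p, j) = c) ∧ ∀ i : Fin n, i.val + 1 = j.val → ∀ p, f (p, i) = c → f (p, j) ≠ c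

instance [Fintype α] [DecidableEq κ] (f : α × Fin n → κ) (j : Fin n) (c : κ) :
    Decidable (IsLayerStart f j c) := by
  unfold IsLayerStart; infer_instance

theorem isLayerStart_zero_iff {f : α × Fin (m + 1) → κ} {c : κ} :
    IsLayerStart f 0 c ↔ ∃ p, f (p, 0) = c :=
  ⟨And.left, fun h => ⟨h, fun i hi => absurd hi (by simp)⟩⟩

theorem isLayerStart_succ_iff {f : α × Fin (m + 1) → κ} {i : Fin m} {c : κ} :
    IsLayerStart f i.succ c ↔
      (∃ p, f (p, i.succ) = c) ∧ ∀ p, f (p, i.castSucc) = c → f (p, i.succ) ≠ c := by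
  refine and_congr_right' ⟨fun h => h _ (by simp), fun h i' hi' => ?_⟩
  obtain rfl : i' = i.castSucc :=
    Fin.ext (by simp only [Fin.val_succ, Fin.val_castSucc] at hi' ⊢; omega)
  exact h

theorem IsLayerStart.not_reachable {j : Fin n} {c : κ} (hj : IsLayerStart f j c)
    {u : α × Fin n} (hu : f u = c) (hlt : u.2 < j) (p : α) :
    ¬ ((H □ pathGraph n).monoGraph f).Reachable u (p, j) := by
  rintro ⟨w⟩
  obtain ⟨q, i, hij, hqi, hqj⟩ := exists_vertical_monochromatic_of_walk w hlt le_rfl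
  exact hj.2 i hij q (hqi.trans hu) (hqj.trans hu)

theorem IsLayerStart.eq_of_reachable {j₁ j₂ : Fin n} {c₁ c₂ : κ} {p₁ p₂ : α}
    (h₁ : IsLayerStart f j₁ c₁) (h₂ : IsLayerStart f j₂ c₂)
    (hp₁ : f (p₁, j₁) = c₁) (hp₂ : f (p₂, j₂) = c₂)
    (hr : ((H □ pathGraph n).monoGraph f).Reachable (p₁, j₁) (p₂, j₂)) :
    (j₁, c₁) = (j₂, c₂) := by
  have hc : c₁ = c₂ := hp₁.symm.trans (hr.apply_eq_of_monoGraph.trans hp₂)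
  subst hc
  rcases lt_trichotomy j₁ j₂ with hlt | rfl | hgt
  · exact absurd hr (h₂.not_reachable hp₁ hlt p₂)
  · rfl
  · exact absurd hr.symm (h₁.not_reachable hp₂ hgt p₁)

theorem reachable_monoGraph_top_boxProd_of_apply_eq {a b : α} {j : Fin n}
    (h : f (a, j) = f (b, j)) :
    (((⊤ : SimpleGraph α) □ pathGraph n).monoGraph f).Reachable (a, j) (b, j) := by
  rcases eq_or_ne a b with rfl | hab
  · rfl
  · exact Adj.reachable ⟨boxProd_adj.mpr (Or.inl ⟨hab, rfl⟩), h⟩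

theorem SimpleGraph.ConnectedComponent.exists_isLayerStart
    (C : (((⊤ : SimpleGraph α) □ pathGraph n).monoGraph f).ConnectedComponent) :
    ∃ p j, (p, j) ∈ C ∧ IsLayerStart f j (f (p, j)) := by
  obtain ⟨v, hv⟩ := C.nonempty_supp
  obtain ⟨j, ⟨p, hp⟩, hmin⟩ := Set.exists_min_image {j : Fin n | ∃ p, (p, j) ∈ C} id
    (Set.toFinite _) ⟨v.2, v.1, hv⟩
  refine ⟨p, j, hp, ⟨p, rfl⟩, fun i hij q hqi hqj => ?_⟩
  have hvert : (((⊤ : SimpleGraph α) □ pathGraph n).monoGraph f).Adj (q, i) (q, j) :=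
    ⟨boxProd_adj.mpr (Or.inr ⟨pathGraph_adj.mpr (Or.inl hij), rfl⟩), hqi.trans hqj.symm⟩
  have hqC : (q, i) ∈ C := (C.mem_supp_iff _).mpr <| .trans (ConnectedComponent.sound
    (hvert.reachable.trans (reachable_monoGraph_top_boxProd_of_apply_eq hqj))) hp
  have := hmin i ⟨q, hqC⟩
  simp only [id, Fin.le_def] at this
  omega

theorem card_connectedComponent_monoGraph_top_boxProd [Fintype α] [Fintype κ] [DecidableEq κ]
    (f : α × Fin n → κ) :
    Nat.card (((⊤ : SimpleGraph α) □ pathGraph n).monoGraph f).ConnectedComponent =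
      Finset.card {jc : Fin n × κ | IsLayerStart f jc.1 jc.2} := by
  rw [← Fintype.card_subtype, ← Nat.card_eq_fintype_card]
  let Φ : {jc : Fin n × κ // IsLayerStart f jc.1 jc.2} →
      (((⊤ : SimpleGraph α) □ pathGraph n).monoGraph f).ConnectedComponent := fun jc =>
    connectedComponentMk _ (jc.2.1.choose, jc.1.1)
  have hΦ (jc : {jc : Fin n × κ // IsLayerStart f jc.1 jc.2}) :
      f (jc.2.1.choose, jc.1.1) = jc.1.2 :=
    jc.2.1.choose_spec
  refine (Nat.card_eq_of_bijective Φ ⟨fun a b hab => ?_, fun C => ?_⟩).symm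
  · exact Subtype.ext <| a.2.eq_of_reachable b.2 (hΦ a) (hΦ b) (ConnectedComponent.exact hab)
  · obtain ⟨p, j, hpC, hstart⟩ := C.exists_isLayerStart
    exact ⟨⟨(j, f (p, j)), hstart⟩,
      (ConnectedComponent.sound (reachable_monoGraph_top_boxProd_of_apply_eq (hΦ _))).trans hpC⟩

end Layers

section Counting

open Finset Fintype

variable {ι X : Type*} [Fintype ι] [DecidableEq ι] [Fintype X]

theorem card_filter_apply_eval (i : ι) (P : X → Prop) [DecidablePred P] :
    #{g : ι → X | P (g i)} = card X ^ (card ι - 1) * #{x | P x} := by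
  rw [card_filter, card_filter, ← (Equiv.funSplitAt i X).symm.sum_comp, sum_prod_type, mul_sum]
  simp [card_subtype_compl]

theorem card_filter_apply_eval₂ {i i' : ι} (h : i ≠ i') (P : X → X → Prop)
    [DecidableRel P] :
    #{g : ι → X | P (g i) (g i')} = card X ^ (card ι - 2) * #{xy : X × X | P xy.1 xy.2} := by
  rw [card_filter, card_filter, ← (Equiv.funSplitAt i X).symm.sum_comp, sum_prod_type,
    sum_prod_type, mul_sum]
  refine sum_congr rfl fun x _ => ?_
  have hrest := card_filter_apply_eval (X := X) (⟨i', h.symm⟩ : {j // j ≠ i}) (P x)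
  rw [card_filter, card_filter, card_subtype_compl, card_subtype_eq] at hrest
  simp only [Equiv.funSplitAt_symm_apply, dite_true, dif_neg h.symm, hrest, Nat.sub_sub]

end Counting

section LayerCounting

open Finset Fintype

def layersEquiv (α ι κ : Type*) : (ι → α → κ) ≃ (α × ι → κ) :=
  (Equiv.curry ι α κ).symm.trans ((Equiv.prodComm ι α).arrowCongr (Equiv.refl κ))

variable {α κ : Type*} [Fintype α] [DecidableEq α] [Fintype κ]

theorem card_filter_apply_layer {ι : Type*} [Fintype ι] [DecidableEq ι] (j : ι)
    (P : (α → κ) → Prop) [DecidablePred P] :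
    #{f : α × ι → κ | P fun p => f (p, j)} = (card κ ^ card α) ^ (card ι - 1) * #{x | P x} := by
  rw [card_filter, ← (layersEquiv α ι κ).sum_comp, ← card_fun, ← card_filter_apply_eval j P,
    card_filter]
  rfl

theorem card_filter_apply_layer₂ {ι : Type*} [Fintype ι] [DecidableEq ι] {i j : ι} (h : i ≠ j)
    (P : (α → κ) → (α → κ) → Prop) [DecidableRel P] :
    #{f : α × ι → κ | P (fun p => f (p, i)) fun p => f (p, j)} =
      (card κ ^ card α) ^ (card ι - 2) * #{xy : (α → κ) × (α → κ) | P xy.1 xy.2} := by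
  rw [card_filter, ← (layersEquiv α ι κ).sum_comp, ← card_fun, ← card_filter_apply_eval₂ h P,
    card_filter]
  rfl

variable [DecidableEq κ] {m : ℕ}

theorem sum_card_isLayerStart :
    ∑ f : α × Fin (m + 1) → κ, #{jc : Fin (m + 1) × κ | IsLayerStart f jc.1 jc.2} =
      ∑ c, ((card κ ^ card α) ^ m * #{x : α → κ | ∃ p, x p = c} +
        m * ((card κ ^ card α) ^ (m - 1) *
          #{xy : (α → κ) × (α → κ) | (∃ p, xy.2 p = c) ∧ ∀ p, xy.1 p = c → xy.2 p ≠ c})) := by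
  refine (sum_card_bipartiteAbove_eq_sum_card_bipartiteBelow
    (fun f (jc : Fin (m + 1) × κ) => IsLayerStart f jc.1 jc.2)).trans ?_
  simp only [bipartiteBelow]
  rw [sum_prod_type, sum_comm]
  refine sum_congr rfl fun c _ => ?_
  have hcard_succ (i : Fin m) : #{f : α × Fin (m + 1) → κ | IsLayerStart f i.succ c} =
      (card κ ^ card α) ^ (m - 1) *
        #{xy : (α → κ) × (α → κ) | (∃ p, xy.2 p = c) ∧ ∀ p, xy.1 p = c → xy.2 p ≠ c} := by
    rw [filter_congr fun f _ => isLayerStart_succ_iff]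
    simpa using card_filter_apply_layer₂ i.castSucc_lt_succ.ne
      (fun x y => (∃ p, y p = c) ∧ ∀ p, x p = c → y p ≠ c)
  have hcard_zero : #{f : α × Fin (m + 1) → κ | IsLayerStart f 0 c} =
      (card κ ^ card α) ^ m * #{x : α → κ | ∃ p, x p = c} := by
    rw [filter_congr fun f _ => isLayerStart_zero_iff]
    simpa using card_filter_apply_layer (0 : Fin (m + 1)) fun x => ∃ p, x p = c
  simp only [Fin.sum_univ_succ, hcard_zero, hcard_succ, sum_const, card_univ, Fintype.card_fin,
    smul_eq_mul]

end LayerCounting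

section ColorCounting

open Finset Fintype

variable {α κ : Type*} [Fintype α] [DecidableEq α] [Fintype κ] [DecidableEq κ]

theorem card_filter_forall_apply_mem {β : Type*} [Fintype β] [DecidableEq β] (s : Finset β) :
    #{x : α → β | ∀ p, x p ∈ s} = #s ^ card α := by
  rw [show ({x | ∀ p, x p ∈ s} : Finset (α → β)) = piFinset fun _ => s by ext; simp]
  simp

theorem card_filter_forall_apply_ne (c : κ) :
    #{x : α → κ | ∀ p, x p ≠ c} = (card κ - 1) ^ card α := by
  rw [← card_univ, ← card_erase_of_mem (mem_univ c), ← card_filter_forall_apply_mem]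
  simp

theorem card_filter_exists_apply_eq (c : κ) :
    #{x : α → κ | ∃ p, x p = c} = card κ ^ card α - (card κ - 1) ^ card α := by
  have h := card_filter_add_card_filter_not (s := (univ : Finset (α → κ))) fun x => ∃ p, x p = c
  simp only [not_exists, ← ne_eq, card_filter_forall_apply_ne, card_univ, card_fun] at h
  omega

theorem card_filter_forall_apply_eq_imp_apply_ne (c : κ) :
    #{xy : (α → κ) × (α → κ) | ∀ p, xy.1 p = c → xy.2 p ≠ c} = (card κ ^ 2 - 1) ^ card α := by
  have h : card κ ^ 2 - 1 = #((univ : Finset (κ × κ)).erase (c, c)) := by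
    rw [card_erase_of_mem (mem_univ _), card_univ, card_prod, sq]
  rw [h, ← card_filter_forall_apply_mem]
  exact card_equiv (Equiv.arrowProdEquivProdArrow α (fun _ => κ) (fun _ => κ)).symm fun xy => by
    simp [Equiv.arrowProdEquivProdArrow]

theorem card_filter_exists_apply_eq_and_forall_imp_apply_ne (c : κ) :
    #{xy : (α → κ) × (α → κ) | (∃ p, xy.2 p = c) ∧ ∀ p, xy.1 p = c → xy.2 p ≠ c} =
      (card κ ^ 2 - 1) ^ card α - card κ ^ card α * (card κ - 1) ^ card α := by
  have hmissing : #{xy : (α → κ) × (α → κ) | ∀ p, xy.2 p ≠ c} =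
      card κ ^ card α * (card κ - 1) ^ card α := by
    rw [← card_filter_forall_apply_ne c, ← card_fun, ← card_univ, ← card_product]
    congr 1
    ext
    simp
  have hsubset : ({xy | ∀ p, xy.2 p ≠ c} : Finset ((α → κ) × (α → κ))) ⊆
      ({xy | ∀ p, xy.1 p = c → xy.2 p ≠ c} : Finset ((α → κ) × (α → κ))) :=
    monotone_filter_right univ fun _ _ h p _ => h p
  rw [← hmissing, ← card_filter_forall_apply_eq_imp_apply_ne c, ← card_sdiff_of_subset hsubset]
  congr 1
  ext xy
  simp only [mem_filter, mem_univ, true_and, mem_sdiff, not_forall, not_not]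
  tauto

end ColorCounting

/-- For every `n ≥ 1`, `∑_{i ≥ 1} i·c(n,i) = 2^(3n-5)·(37 + 19n)`; equivalently, the
expected size of the partition obtained from a uniformly random 2-coloring of the `3n`
vertices of `K₃ × Pₙ` is `2^(3n-5)·(37 + 19n)/2^(3n)`. -/
theorem expected_size_K3_times_path (n : ℕ) (hn : 1 ≤ n) :
    ∑ᶠ (i : ℕ) (_ : 1 ≤ i), (i * c n i : ℚ)
      = 2 ^ (3 * (n : ℤ) - 5) * (37 + 19 * n) := by
  obtain ⟨m, rfl⟩ := Nat.exists_eq_add_of_le' hn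
  simp only [c, SimpleGraph.card_twoColoredPartition_size_eq]
  rw [finsum_mul_card_fiber]
  simp only [card_connectedComponent_monoGraph_top_boxProd]
  rw [← Nat.cast_sum, sum_card_isLayerStart]
  simp only [card_filter_exists_apply_eq, card_filter_exists_apply_eq_and_forall_imp_apply_ne,
    Fintype.card_fin, Finset.sum_const, Finset.card_univ, smul_eq_mul]
  rcases m with _ | k
  · norm_num
  · rw [show 3 * ((k + 1 + 1 : ℕ) : ℤ) - 5 = ((3 * k + 1 : ℕ) : ℤ) by push_cast; ring, zpow_natCast,
      pow_succ (2 : ℚ) (3 * k), pow_mul (2 : ℚ) 3 k, Nat.add_sub_cancel]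
    push_cast
    ring
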